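/- As x → ∞, Σ_{p ≤ x, p prime} (log p)/p ~ log x. -/

import Mathlib

/-!
By Legendre's formula, `log N! = ∑_{p ≤ N} v_p(N!) log p` with `N/p - 1 ≤ v_p(N!) ≤ N/p + 2N/p²`.
Together with `log N! = N log N + O(N)`, Chebyshev's bound `θ(N) = O(N)` and the convergence of
`∑ log n / n²`, this gives `N ∑_{p ≤ N} log p / p = N log N + O(N)`, so the sum is `log N + O(1)`;
dividing by `log x → ∞` gives the limit.
-/

open Filter Finset Real Asymptotics Chebyshev
open scoped Nat Topology

theorem log_factorial_eq_sum_primesLE (n : ℕ) :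
    log (n ! : ℝ) = ∑ p ∈ Nat.primesLE n, ((n !).factorization p : ℝ) * log p := by
  rw [log_nat_eq_sum_factorization]
  refine Finsupp.sum_of_support_subset _ (fun p hp => ?_) _ (fun p _ => by simp)
  rw [Nat.support_factorization, Nat.mem_primeFactors] at hp
  exact Nat.mem_primesLE.mpr ⟨(hp.1.dvd_factorial).mp hp.2.1, hp.1⟩

theorem Nat.div_le_factorization_factorial {p : ℕ} (hp : p.Prime) (n : ℕ) :
    n / p ≤ (n !).factorization p := by
  rw [Nat.factorization_factorial hp (b := n + 2) (by have := Nat.log_le_self p n; omega)]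
  simpa using Finset.single_le_sum (f := fun i => n / p ^ i) (fun _ _ => Nat.zero_le _)
    (show 1 ∈ Ico 1 (n + 2) by simp)

theorem Nat.Prime.div_sub_one_le_factorization_factorial {p : ℕ} (hp : p.Prime) (n : ℕ) :
    (n : ℝ) / p - 1 ≤ (n !).factorization p := by
  have hp0 : (0 : ℝ) < p := by exact_mod_cast hp.pos
  have hn : (n : ℝ) ≤ (n / p : ℕ) * p + p := by exact_mod_cast (Nat.lt_div_mul_add hp.pos).le
  calc (n : ℝ) / p - 1 ≤ (n / p : ℕ) := by
        rw [sub_le_iff_le_add, div_le_iff₀ hp0]; linarith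
    _ ≤ (n !).factorization p := by exact_mod_cast Nat.div_le_factorization_factorial hp n

theorem Nat.Prime.factorization_factorial_le_div_add_div_sq {p : ℕ} (hp : p.Prime) (n : ℕ) :
    ((n !).factorization p : ℝ) ≤ n / p + 2 * n / p ^ 2 := by
  have hp2 : (2 : ℝ) ≤ p := by exact_mod_cast hp.two_le
  calc ((n !).factorization p : ℝ) ≤ (n / (p - 1) : ℕ) := by
        exact_mod_cast Nat.factorization_factorial_le_div_pred hp n
    _ ≤ n / (p - 1 : ℝ) := by
        rw [← Nat.cast_pred hp.pos]; exact Nat.cast_div_le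
    _ ≤ n / p + 2 * n / p ^ 2 := by
        rw [div_add_div _ _ (by positivity) (by positivity),
          div_le_div_iff₀ (by linarith) (by positivity)]
        nlinarith [mul_nonneg (mul_nonneg (Nat.cast_nonneg (α := ℝ) n) (by linarith : (0:ℝ) ≤ p))
          (by linarith : (0:ℝ) ≤ p - 2)]

theorem summable_log_div_sq : Summable (fun n : ℕ => log n / (n : ℝ) ^ 2) := by
  refine summable_of_isBigO_nat (Real.summable_nat_rpow.mpr (show (-3/2 : ℝ) < -1 by norm_num)) ?_
  have hlog := (isLittleO_log_rpow_atTop (show (0:ℝ) < 1/2 by norm_num)).isBigO.comp_tendsto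
    tendsto_natCast_atTop_atTop
  refine (hlog.mul (isBigO_refl (fun n : ℕ => ((n : ℝ) ^ 2)⁻¹) atTop)).congr'
    (Eventually.of_forall fun n => by simp [div_eq_mul_inv]) ?_
  filter_upwards [eventually_gt_atTop 0] with n hn
  have hn : (0 : ℝ) < n := by exact_mod_cast hn
  simp only [Function.comp_apply]
  rw [← rpow_natCast, ← rpow_neg hn.le, ← rpow_add hn]
  norm_num

theorem mul_sum_primesLE_log_div_le (N : ℕ) :
    N * ∑ p ∈ Nat.primesLE N, log p / p ≤ log (N ! : ℝ) + θ N := by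
  rw [log_factorial_eq_sum_primesLE, theta_eq_sum_primesLE_log, mul_sum, ← sub_le_iff_le_add,
    ← sum_sub_distrib]
  refine sum_le_sum fun p hp => ?_
  have hp := Nat.prime_of_mem_primesLE hp
  calc (N : ℝ) * (log p / p) - log p = ((N : ℝ) / p - 1) * log p := by ring
    _ ≤ _ := mul_le_mul_of_nonneg_right (hp.div_sub_one_le_factorization_factorial N)
        (log_natCast_nonneg p)

theorem log_factorial_le_mul_sum_primesLE_log_div (N : ℕ) :
    log (N ! : ℝ) ≤
      N * ∑ p ∈ Nat.primesLE N, log p / p + 2 * N * ∑' n : ℕ, log n / (n : ℝ) ^ 2 := by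
  have hsub : ∑ p ∈ Nat.primesLE N, log p / (p : ℝ) ^ 2 ≤ ∑' n : ℕ, log n / (n : ℝ) ^ 2 :=
    summable_log_div_sq.sum_le_tsum _ fun n _ => div_nonneg (log_natCast_nonneg n) (sq_nonneg _)
  calc log (N ! : ℝ) ≤ ∑ p ∈ Nat.primesLE N, ((N : ℝ) / p + 2 * N / p ^ 2) * log p := by
        rw [log_factorial_eq_sum_primesLE]
        exact sum_le_sum fun p hp => mul_le_mul_of_nonneg_right
          ((Nat.prime_of_mem_primesLE hp).factorization_factorial_le_div_add_div_sq N)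
          (log_natCast_nonneg p)
    _ = N * ∑ p ∈ Nat.primesLE N, log p / p
          + 2 * N * ∑ p ∈ Nat.primesLE N, log p / (p : ℝ) ^ 2 := by
        rw [mul_sum, mul_sum, ← sum_add_distrib]
        exact sum_congr rfl fun p _ => by ring
    _ ≤ _ := by gcongr

theorem isBigO_sum_primesLE_log_div_sub_log :
    (fun N : ℕ => ∑ p ∈ Nat.primesLE N, log p / p - log N) =O[atTop] fun _ => (1 : ℝ) := by
  set c := ∑' n : ℕ, log n / (n : ℝ) ^ 2
  refine IsBigO.of_bound (log 4 + 1 + 2 * c) ?_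
  filter_upwards [eventually_gt_atTop 0] with N hN0
  have hN : (0 : ℝ) < N := by exact_mod_cast hN0
  set S := ∑ p ∈ Nat.primesLE N, log p / p
  have hc : 0 ≤ c := tsum_nonneg fun n => div_nonneg (log_natCast_nonneg n) (sq_nonneg _)
  have hfact_le : log (N ! : ℝ) ≤ N * log N := by
    rw [← log_pow]; exact log_le_log (by positivity) (by exact_mod_cast Nat.factorial_le_pow N)
  have hfact_ge := Stirling.le_log_factorial_stirling hN0.ne'
  have hlogN := log_natCast_nonneg N
  have hlog2π : 0 ≤ log (2 * π) := log_nonneg (by linarith [pi_gt_three])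
  have hupper : N * (S - log N) ≤ N * log 4 := by
    linarith [mul_sum_primesLE_log_div_le N, theta_le_log4_mul_x hN.le]
  have hlower : N * (log N - S) ≤ N * (1 + 2 * c) := by
    linarith [log_factorial_le_mul_sum_primesLE_log_div N]
  rw [norm_one, mul_one, norm_eq_abs, abs_le]
  constructor <;> linarith [le_of_mul_le_mul_left hupper hN, le_of_mul_le_mul_left hlower hN,
    log_nonneg (show (1 : ℝ) ≤ 4 by norm_num)]

theorem Asymptotics.IsBigO.tendsto_div_nhds_one_of_tendsto_atTop {α : Type*} {l : Filter α}
    {f g : α → ℝ}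
    (h : (f - g) =O[l] fun _ => (1 : ℝ)) (hg : Tendsto g l atTop) :
    Tendsto (fun x => f x / g x) l (𝓝 1) := by
  have hfg : f ~[l] g := h.trans_isLittleO
    ((isLittleO_one_left_iff ℝ).mpr (tendsto_norm_atTop_atTop.comp hg))
  exact (isEquivalent_iff_tendsto_one (hg.eventually_ne_atTop 0)).mp hfg

theorem tendsto_log_natFloor_sub_log :
    Tendsto (fun x : ℝ => log ⌊x⌋₊ - log x) atTop (𝓝 0) := by
  have := (tendsto_nat_floor_div_atTop (R := ℝ)).log one_ne_zero
  rw [log_one] at this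
  refine this.congr' ?_
  filter_upwards [eventually_ge_atTop 1] with x hx
  have : (0 : ℝ) < ⌊x⌋₊ := by exact_mod_cast Nat.floor_pos.mpr hx
  exact log_div this.ne' (by positivity)

theorem stmt_16 :
    Tendsto (fun x : ℝ =>
        (∑ p ∈ (Finset.Iic ⌊x⌋₊).filter Nat.Prime, Real.log p / p) / Real.log x)
      atTop (nhds 1) := by
  have hprimes (N : ℕ) : (Iic N).filter Nat.Prime = Nat.primesLE N := by
    ext p; simp [Nat.mem_primesLE]
  simp only [hprimes]
  refine IsBigO.tendsto_div_nhds_one_of_tendsto_atTop ?_ tendsto_log_atTop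
  have hbound := (isBigO_sum_primesLE_log_div_sub_log.comp_tendsto tendsto_nat_floor_atTop).add
    (tendsto_log_natFloor_sub_log.isBigO_one ℝ)
  simpa [Function.comp_def] using hbound
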